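/- Let μ, r ∈ ℝ, σ > 0 and T > 0. For u > 0, x ∈ (0,1), z ∈ ℝ, set A(u,z) := exp((μ − r − σ²/2)·u + σ·√u·z) and Y(u,x,z) := x·A(u,z)/(x·A(u,z) + 1 − x), and let γ denote the standard Gaussian measure on ℝ (mean 0, variance 1). Then there exists a constant C such that for all u ∈ (0,T] and all x ∈ (0,1), ∫_ℝ |Y(u,x,z) − x| dγ(z) ≤ C·√u. -/

import Mathlib

/-! With `L = log (x / (1 - x))`, the wealth fraction with `A = exp y` is `sigmoid (L + y)` while
`x = sigmoid L`. The logistic function is `1/4`-Lipschitz, so `|Y - x| ≤ |y| / 4`, and for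
`u ≤ T` the exponent `y = (μ - r - σ²/2) u + σ √u z` is bounded by `√u (|μ - r - σ²/2| √T + |σ| |z|)`,
whose Gaussian integral is finite. -/

open Set MeasureTheory ProbabilityTheory

/-- The stochastic exponential factor `A(u,z) = exp((μ-r-σ²/2)u + σ√u z)`. -/
noncomputable def stochExp (μ r σ u z : ℝ) : ℝ :=
  Real.exp ((μ - r - σ^2 / 2) * u + σ * Real.sqrt u * z)

/-- The uncontrolled wealth fraction `Y(u,x,z) = x A / (x A + 1 - x)`. -/
noncomputable def wealthFrac (μ r σ u x z : ℝ) : ℝ :=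
  x * stochExp μ r σ u z / (x * stochExp μ r σ u z + 1 - x)

namespace Real

lemma sigmoid_mul_one_sub_le (x : ℝ) : sigmoid x * (1 - sigmoid x) ≤ 4⁻¹ := by
  nlinarith [sq_nonneg (sigmoid x - 2⁻¹)]

lemma lipschitzWith_sigmoid : LipschitzWith 4⁻¹ sigmoid := by
  refine lipschitzWith_of_nnnorm_deriv_le differentiable_sigmoid fun x => ?_
  rw [← NNReal.coe_le_coe, coe_nnnorm, deriv_sigmoid, norm_of_nonneg
    (mul_nonneg (sigmoid_nonneg x) (sub_nonneg.mpr (sigmoid_le_one x)))]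
  simpa using sigmoid_mul_one_sub_le x

lemma sigmoid_log_div_one_sub_add {x : ℝ} (hx : x ∈ Ioo 0 1) (y : ℝ) :
    sigmoid (log (x / (1 - x)) + y) = x * exp y / (x * exp y + 1 - x) := by
  obtain ⟨hx0, hx1⟩ := hx
  have h1x : 0 < 1 - x := sub_pos.mpr hx1
  have hD : x * exp y + 1 - x ≠ 0 := by nlinarith [exp_pos y]
  rw [sigmoid_def, neg_add, exp_add, exp_neg, exp_log (div_pos hx0 h1x), exp_neg]
  field_simp
  ring

lemma abs_mul_exp_div_sub_le {x : ℝ} (hx : x ∈ Ioo 0 1) (y : ℝ) :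
    |x * exp y / (x * exp y + 1 - x) - x| ≤ |y| / 4 := by
  set L := log (x / (1 - x))
  have hx_eq : x = sigmoid (L + 0) := by
    rw [sigmoid_log_div_one_sub_add hx, exp_zero, mul_one, add_sub_cancel_left, div_one]
  calc |x * exp y / (x * exp y + 1 - x) - x| = |sigmoid (L + y) - sigmoid (L + 0)| := by
        rw [← hx_eq, sigmoid_log_div_one_sub_add hx]
    _ ≤ |y| / 4 := by
        simpa [dist_eq, div_eq_inv_mul] using lipschitzWith_sigmoid.dist_le_mul (L + y) (L + 0)

end Real

lemma abs_mul_add_mul_sqrt_le {a σ u T : ℝ} (hu : u ∈ Icc 0 T) (z : ℝ) :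
    |a * u + σ * √u * z| ≤ √u * (|a| * √T + |σ| * |z|) := by
  obtain ⟨hu0, huT⟩ := hu
  have hu_sq : u = √u * √u := (Real.mul_self_sqrt hu0).symm
  calc |a * u + σ * √u * z| ≤ |a| * u + |σ| * √u * |z| := by
        refine (abs_add_le _ _).trans_eq ?_
        rw [abs_mul, abs_mul, abs_mul, abs_of_nonneg hu0, abs_of_nonneg (Real.sqrt_nonneg u)]
    _ = √u * (|a| * √u + |σ| * |z|) := by linear_combination |a| * hu_sq
    _ ≤ √u * (|a| * √T + |σ| * |z|) := by gcongr

theorem wealthFrac_increment_sqrt_bound_general (μ r σ T : ℝ) :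
    ∃ C : ℝ, ∀ u ∈ Ioc (0:ℝ) T, ∀ x ∈ Ioo (0:ℝ) 1,
      (∫ z, |wealthFrac μ r σ u x z - x| ∂(gaussianReal 0 1)) ≤ C * Real.sqrt u := by
  set a := μ - r - σ ^ 2 / 2
  set h : ℝ → ℝ := fun z => (|a| * √T + |σ| * |z|) / 4
  have h_int : Integrable h (gaussianReal 0 1) :=
    ((integrable_const _).add
      ((memLp_one_iff_integrable.mp (memLp_id_gaussianReal 1)).abs.const_mul _)).div_const _
  refine ⟨∫ z, h z ∂gaussianReal 0 1, fun u hu x hx => ?_⟩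
  have h_pointwise (z : ℝ) : |wealthFrac μ r σ u x z - x| ≤ √u * h z := by
    calc |wealthFrac μ r σ u x z - x| ≤ |a * u + σ * √u * z| / 4 :=
          Real.abs_mul_exp_div_sub_le hx _
      _ ≤ √u * (|a| * √T + |σ| * |z|) / 4 := by
          gcongr; exact abs_mul_add_mul_sqrt_le (Ioc_subset_Icc_self hu) z
      _ = √u * h z := by ring
  calc ∫ z, |wealthFrac μ r σ u x z - x| ∂gaussianReal 0 1
      ≤ ∫ z, √u * h z ∂gaussianReal 0 1 :=
        integral_mono_of_nonneg (.of_forall fun _ => abs_nonneg _) (h_int.const_mul _)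
          (.of_forall h_pointwise)
    _ = (∫ z, h z ∂gaussianReal 0 1) * √u := by rw [integral_const_mul, mul_comm]

/-- Lemma 5.5 (v), bound part: `E[|Y_s^{(t,x)} - x|] ≤ C √(s-t)` uniformly in
`u = s - t ∈ (0,T]` and `x ∈ (0,1)`. -/
theorem wealthFrac_increment_sqrt_bound (μ r σ T : ℝ) (hσ : 0 < σ) (hT : 0 < T) :
    ∃ C : ℝ, ∀ u ∈ Ioc (0:ℝ) T, ∀ x ∈ Ioo (0:ℝ) 1,
      (∫ z, |wealthFrac μ r σ u x z - x| ∂(gaussianReal 0 1)) ≤ C * Real.sqrt u :=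
  wealthFrac_increment_sqrt_bound_general μ r σ T
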